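/- Let h > 0, let λ₁ ∈ ℂ \ {0}, let U_n(t), R_n(t), Q_n(t) be complex-valued functions, and let (f_n, g_n) be a solution of the associated Lax pair at λ = λ₁. Let Ω_n(t) be a complex-valued function, differentiable in t, satisfying Ω_{n+1} = −S_n Ω_n and Ω_n' = (i/2)(conj(λ₁)² − conj(λ₁)⁻² + |Q_n|² − |R_n|²) Ω_n for all n and t, where S_n := (1 + (i/2)h|U_n|²)/(1 − (i/2)h|U_n|²). Then the pair ((−1)^n Ω_n conj(g_n), (−1)^n Ω_n conj(f_n)) is a solution of the Lax pair at λ = −conj(λ₁). -/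

import Mathlib

open Complex ComplexConjugate

noncomputable section

/-- The factor `S = (1 + (i/2) h |u|^2)/(1 - (i/2) h |u|^2)`. -/
def mtmS (h : ℝ) (u : ℂ) : ℂ :=
  (1 + Complex.I / 2 * h * Complex.normSq u) / (1 - Complex.I / 2 * h * Complex.normSq u)

/-- `(U, R, Q)` solves the semi-discrete massive Thirring model with lattice spacing `h`. -/
def IsMTMSolution (h : ℝ) (U R Q : ℤ → ℝ → ℂ) : Prop :=
  (∀ (n : ℤ) (t : ℝ), DifferentiableAt ℝ (U n) t) ∧
  (∀ (n : ℤ) (t : ℝ),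
    4 * Complex.I * deriv (U n) t + Q (n + 1) t + Q n t
      + 2 * Complex.I / h * (R (n + 1) t - R n t)
      + (U n t) ^ 2 * (conj (R n t) + conj (R (n + 1) t))
      - U n t * ((Complex.normSq (Q (n + 1) t) : ℂ) + (Complex.normSq (Q n t) : ℂ)
          + (Complex.normSq (R (n + 1) t) : ℂ) + (Complex.normSq (R n t) : ℂ))
      - Complex.I * h / 2 * (U n t) ^ 2 * (conj (Q (n + 1) t) - conj (Q n t)) = 0) ∧
  (∀ (n : ℤ) (t : ℝ),
    -(2 * Complex.I / h) * (Q (n + 1) t - Q n t) + 2 * U n t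
      - (Complex.normSq (U n t) : ℂ) * (Q (n + 1) t + Q n t) = 0) ∧
  (∀ (n : ℤ) (t : ℝ),
    R (n + 1) t + R n t - 2 * U n t
      + Complex.I * h / 2 * (Complex.normSq (U n t) : ℂ) * (R (n + 1) t - R n t) = 0)

/-- `(f, g)` solves the Lax pair of the semi-discrete massive Thirring model with
potentials `(U, R, Q)`, lattice spacing `h`, at spectral value `lam`. -/
def IsLaxSolution (h : ℝ) (U R Q : ℤ → ℝ → ℂ) (lam : ℂ) (f g : ℤ → ℝ → ℂ) : Prop :=
  (∀ (n : ℤ) (t : ℝ), DifferentiableAt ℝ (f n) t) ∧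
  (∀ (n : ℤ) (t : ℝ), DifferentiableAt ℝ (g n) t) ∧
  (∀ (n : ℤ) (t : ℝ),
    f (n + 1) t = (lam + 2 * Complex.I / (h * lam) * mtmS h (U n t)) * f n t
      + 2 * U n t / (1 - Complex.I / 2 * h * Complex.normSq (U n t)) * g n t) ∧
  (∀ (n : ℤ) (t : ℝ),
    g (n + 1) t = 2 * conj (U n t) / (1 - Complex.I / 2 * h * Complex.normSq (U n t)) * f n t
      + (2 * Complex.I / (h * lam) - lam * mtmS h (U n t)) * g n t) ∧
  (∀ (n : ℤ) (t : ℝ),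
    deriv (f n) t = Complex.I / 2 * ((lam ^ 2 - (Complex.normSq (R n t) : ℂ)) * f n t
      + (lam * R n t - lam⁻¹ * Q n t) * g n t)) ∧
  (∀ (n : ℤ) (t : ℝ),
    deriv (g n) t = Complex.I / 2 * ((lam * conj (R n t) - lam⁻¹ * conj (Q n t)) * f n t
      + ((Complex.normSq (Q n t) : ℂ) - (lam ^ 2)⁻¹) * g n t))

/-! Conjugating the Lax pair at `λ` and swapping `f ↔ g` produces the Lax pair at `-conj λ`
once the gauge factor `(-1)^n Ω_n` absorbs the leftover diagonal terms. The discrete part only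
needs `|S| = 1`, i.e. `conj S = S⁻¹`, together with `2 / (1 - (i/2) h |u|²) = 1 + S`, which
writes the off-diagonal coefficients through `S` as well. -/

section MtmFactor

variable (h : ℝ) (u : ℂ)

lemma one_sub_mtm_ne_zero : 1 - I / 2 * h * normSq u ≠ 0 := fun hz => by
  simpa using congrArg re hz

lemma one_add_mtm_ne_zero : 1 + I / 2 * h * normSq u ≠ 0 := fun hz => by
  simpa using congrArg re hz

lemma conj_one_sub_mtm : conj (1 - I / 2 * h * normSq u) = 1 + I / 2 * h * normSq u := by
  simp only [map_sub, map_mul, map_div₀, map_one, map_ofNat, conj_I, conj_ofReal]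
  ring

lemma conj_one_add_mtm : conj (1 + I / 2 * h * normSq u) = 1 - I / 2 * h * normSq u := by
  simp only [map_add, map_mul, map_div₀, map_one, map_ofNat, conj_I, conj_ofReal]
  ring

lemma conj_mtmS : conj (mtmS h u) = (mtmS h u)⁻¹ := by
  rw [mtmS, map_div₀, conj_one_add_mtm, conj_one_sub_mtm, inv_div]

lemma mtmS_ne_zero : mtmS h u ≠ 0 :=
  div_ne_zero (one_add_mtm_ne_zero h u) (one_sub_mtm_ne_zero h u)

lemma two_mul_div_one_sub_mtm (z : ℂ) :
    2 * z / (1 - I / 2 * h * normSq u) = (1 + mtmS h u) * z := by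
  rw [mtmS, one_add_div (one_sub_mtm_ne_zero h u)]
  ring

end MtmFactor

lemma neg_one_zpow_succ_mul_neg (n : ℤ) (s ω : ℂ) :
    (-1 : ℂ) ^ (n + 1) * (-s * ω) = s * ((-1) ^ n * ω) := by
  rw [zpow_add_one₀ (by norm_num)]
  ring

lemma HasDerivAt.const_mul_mul_conj {Ω φ : ℝ → ℂ} {Ω' φ' : ℂ} {t : ℝ} (c : ℂ)
    (hΩ : HasDerivAt Ω Ω' t) (hφ : HasDerivAt φ φ' t) :
    HasDerivAt (fun s => c * Ω s * conj (φ s)) (c * Ω' * conj (φ t) + c * Ω t * conj φ') t :=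
  (hΩ.const_mul c).mul hφ.star

section LaxSymmetry

variable (h : ℝ) (u lam R Q f g c ω : ℂ)

lemma conj_swap_space_fst :
    mtmS h u * ω * conj (2 * conj u / (1 - I / 2 * h * normSq u) * f
        + (2 * I / (h * lam) - lam * mtmS h u) * g)
      = (-conj lam + 2 * I / (h * -conj lam) * mtmS h u) * (ω * conj g)
        + 2 * u / (1 - I / 2 * h * normSq u) * (ω * conj f) := by
  simp only [two_mul_div_one_sub_mtm, map_add, map_sub, map_mul, map_div₀, map_one, map_ofNat,
    conj_conj, conj_I, conj_ofReal, conj_mtmS]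
  field_simp [mtmS_ne_zero h u]
  ring

lemma conj_swap_space_snd :
    mtmS h u * ω * conj ((lam + 2 * I / (h * lam) * mtmS h u) * f
        + 2 * u / (1 - I / 2 * h * normSq u) * g)
      = 2 * conj u / (1 - I / 2 * h * normSq u) * (ω * conj g)
        + (2 * I / (h * -conj lam) - -conj lam * mtmS h u) * (ω * conj f) := by
  simp only [two_mul_div_one_sub_mtm, map_add, map_mul, map_div₀, map_one, map_ofNat,
    conj_I, conj_ofReal, conj_mtmS]
  field_simp [mtmS_ne_zero h u]
  ring

lemma conj_swap_time_fst :
    c * (I / 2 * (conj lam ^ 2 - (conj lam ^ 2)⁻¹ + normSq Q - normSq R) * ω) * conj g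
        + c * ω * conj (I / 2 * ((lam * conj R - lam⁻¹ * conj Q) * f
          + (normSq Q - (lam ^ 2)⁻¹) * g))
      = I / 2 * (((-conj lam) ^ 2 - normSq R) * (c * ω * conj g)
        + (-conj lam * R - (-conj lam)⁻¹ * Q) * (c * ω * conj f)) := by
  simp only [map_add, map_sub, map_mul, map_div₀, map_inv₀, map_pow, map_ofNat, conj_conj,
    conj_I, conj_ofReal]
  ring

lemma conj_swap_time_snd :
    c * (I / 2 * (conj lam ^ 2 - (conj lam ^ 2)⁻¹ + normSq Q - normSq R) * ω) * conj f
        + c * ω * conj (I / 2 * ((lam ^ 2 - normSq R) * f + (lam * R - lam⁻¹ * Q) * g))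
      = I / 2 * ((-conj lam * conj R - (-conj lam)⁻¹ * conj Q) * (c * ω * conj g)
        + (normSq Q - ((-conj lam) ^ 2)⁻¹) * (c * ω * conj f)) := by
  simp only [map_add, map_sub, map_mul, map_div₀, map_inv₀, map_pow, map_ofNat, conj_I,
    conj_ofReal]
  ring

end LaxSymmetry

theorem lax_symmetry_neg_conj_general
    (h : ℝ) (lam1 : ℂ)
    (U R Q : ℤ → ℝ → ℂ) (f g : ℤ → ℝ → ℂ)
    (hLax : IsLaxSolution h U R Q lam1 f g)
    (Ω : ℤ → ℝ → ℂ)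
    (hΩdiff : ∀ (n : ℤ) (t : ℝ), DifferentiableAt ℝ (Ω n) t)
    (hΩrec : ∀ (n : ℤ) (t : ℝ), Ω (n + 1) t = -(mtmS h (U n t)) * Ω n t)
    (hΩode : ∀ (n : ℤ) (t : ℝ),
      deriv (Ω n) t = Complex.I / 2 * ((conj lam1) ^ 2 - ((conj lam1) ^ 2)⁻¹
        + (Complex.normSq (Q n t) : ℂ) - (Complex.normSq (R n t) : ℂ)) * Ω n t) :
    IsLaxSolution h U R Q (-(conj lam1))
      (fun n t => (-1 : ℂ) ^ n * Ω n t * conj (g n t))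
      (fun n t => (-1 : ℂ) ^ n * Ω n t * conj (f n t)) := by
  obtain ⟨hfd, hgd, hfrec, hgrec, hfode, hgode⟩ := hLax
  have hF n t := (hΩdiff n t).hasDerivAt.const_mul_mul_conj ((-1) ^ n) (hgd n t).hasDerivAt
  have hG n t := (hΩdiff n t).hasDerivAt.const_mul_mul_conj ((-1) ^ n) (hfd n t).hasDerivAt
  refine ⟨fun n t => (hF n t).differentiableAt, fun n t => (hG n t).differentiableAt,
    fun n t => ?_, fun n t => ?_, fun n t => ?_, fun n t => ?_⟩
  · dsimp only
    rw [hΩrec, neg_one_zpow_succ_mul_neg, hgrec]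
    exact conj_swap_space_fst ..
  · dsimp only
    rw [hΩrec, neg_one_zpow_succ_mul_neg, hfrec]
    exact conj_swap_space_snd ..
  · rw [(hF n t).deriv, hΩode, hgode]
    exact conj_swap_time_fst ..
  · rw [(hG n t).deriv, hΩode, hfode]
    exact conj_swap_time_snd ..

/-- Symmetry of the Lax pair: from a solution at `lam1` one obtains a solution at `-conj lam1`. -/
theorem lax_symmetry_neg_conj
    (h : ℝ) (hh : 0 < h) (lam1 : ℂ) (hlam1 : lam1 ≠ 0)
    (U R Q : ℤ → ℝ → ℂ) (f g : ℤ → ℝ → ℂ)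
    (hLax : IsLaxSolution h U R Q lam1 f g)
    (Ω : ℤ → ℝ → ℂ)
    (hΩdiff : ∀ (n : ℤ) (t : ℝ), DifferentiableAt ℝ (Ω n) t)
    (hΩrec : ∀ (n : ℤ) (t : ℝ), Ω (n + 1) t = -(mtmS h (U n t)) * Ω n t)
    (hΩode : ∀ (n : ℤ) (t : ℝ),
      deriv (Ω n) t = Complex.I / 2 * ((conj lam1) ^ 2 - ((conj lam1) ^ 2)⁻¹
        + (Complex.normSq (Q n t) : ℂ) - (Complex.normSq (R n t) : ℂ)) * Ω n t) :
    IsLaxSolution h U R Q (-(conj lam1))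
      (fun n t => (-1 : ℂ) ^ n * Ω n t * conj (g n t))
      (fun n t => (-1 : ℂ) ^ n * Ω n t * conj (f n t)) :=
  lax_symmetry_neg_conj_general h lam1 U R Q f g hLax Ω hΩdiff hΩrec hΩode
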